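/- arXiv:math/0307097 — 2 statements merged into one kernel-verified Lean document; each statement's English description precedes it below -/
import Mathlib

section
/- Let p be an odd prime and d ≥ 1. If K is a closed subgroup of the symplectic group Sp_{2d}(ℤ_p) whose image under the reduction map Sp_{2d}(ℤ_p) → Sp_{2d}(ℤ/p²ℤ) is all of Sp_{2d}(ℤ/p²ℤ), then K = Sp_{2d}(ℤ_p). (Lemma 2.2.1(a) instantiated at G = Sp_{2d} over ℤ_p.) -/
/-
Fix `x ∈ Sp_{2d}(ℤ_p)`. The fibres of reduction mod `p^n` shrink to points and `K` is closed, so it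
suffices that `K` meets `x` modulo every `p^n`; this is proved by induction on `n ≥ 2`.
If `k ∈ K` agrees with `x` mod `p^n`, write `x k⁻¹ = 1 + p^n B`. Then `B' = ½ (B + J Bᵀ J)` lies in
`𝔰𝔭_{2d}` and `B' ≡ B` mod `p^n`, so the Cayley transform `(1 + Y)(1 - Y)⁻¹` of `Y = ½ p^(n-1) B'`
is symplectic and `≡ 1 + p^(n-1) B` mod `p^n`. By induction some `k' ∈ K` agrees with it mod `p^n`,
and as `p` is odd the binomial theorem gives `k'^p ≡ 1 + p^n B` mod `p^(n+1)`, so that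
`k'^p k ≡ x` mod `p^(n+1)`.
-/

open Matrix

/-- The standard symplectic matrix `J = ((0, I), (−I, 0))`. -/
def Jmat (d : ℕ) (R : Type*) [CommRing R] :
    Matrix (Fin d ⊕ Fin d) (Fin d ⊕ Fin d) R :=
  Matrix.fromBlocks 0 1 (-1) 0

/-- The symplectic group `Sp_{2d}(R) = {g ∈ GL_{2d}(R) : gᵀ J g = J}`, as a subgroup of
`GL_{2d}(R)`. -/
def SpSubgroup (d : ℕ) (R : Type*) [CommRing R] : Subgroup (GL (Fin d ⊕ Fin d) R) where
  carrier := {g | (g : Matrix (Fin d ⊕ Fin d) (Fin d ⊕ Fin d) R)ᵀ * Jmat d R * g = Jmat d R}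
  one_mem' := by simp
  mul_mem' := by
    intro a b ha hb
    simp only [Set.mem_setOf_eq, Units.val_mul, Matrix.transpose_mul] at *
    have h : (b : Matrix (Fin d ⊕ Fin d) (Fin d ⊕ Fin d) R)ᵀ *
        (a : Matrix (Fin d ⊕ Fin d) (Fin d ⊕ Fin d) R)ᵀ * Jmat d R *
        ((a : Matrix (Fin d ⊕ Fin d) (Fin d ⊕ Fin d) R) *
          (b : Matrix (Fin d ⊕ Fin d) (Fin d ⊕ Fin d) R)) =
        (b : Matrix (Fin d ⊕ Fin d) (Fin d ⊕ Fin d) R)ᵀ *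
          ((a : Matrix (Fin d ⊕ Fin d) (Fin d ⊕ Fin d) R)ᵀ * Jmat d R *
            (a : Matrix (Fin d ⊕ Fin d) (Fin d ⊕ Fin d) R)) *
          (b : Matrix (Fin d ⊕ Fin d) (Fin d ⊕ Fin d) R) := by
      noncomm_ring
    rw [h, ha, hb]
  inv_mem' := by
    intro a ha
    simp only [Set.mem_setOf_eq] at *
    have h2 : (a : Matrix (Fin d ⊕ Fin d) (Fin d ⊕ Fin d) R) *
        ((a⁻¹ : GL (Fin d ⊕ Fin d) R) : Matrix (Fin d ⊕ Fin d) (Fin d ⊕ Fin d) R) = 1 := by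
      rw [← Units.val_mul, mul_inv_cancel, Units.val_one]
    have h1 : ((a⁻¹ : GL (Fin d ⊕ Fin d) R) : Matrix (Fin d ⊕ Fin d) (Fin d ⊕ Fin d) R)ᵀ *
        (a : Matrix (Fin d ⊕ Fin d) (Fin d ⊕ Fin d) R)ᵀ = 1 := by
      rw [← Matrix.transpose_mul, h2, Matrix.transpose_one]
    calc ((a⁻¹ : GL (Fin d ⊕ Fin d) R) : Matrix (Fin d ⊕ Fin d) (Fin d ⊕ Fin d) R)ᵀ * Jmat d R *
          ((a⁻¹ : GL (Fin d ⊕ Fin d) R) : Matrix (Fin d ⊕ Fin d) (Fin d ⊕ Fin d) R)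
        = ((a⁻¹ : GL (Fin d ⊕ Fin d) R) : Matrix (Fin d ⊕ Fin d) (Fin d ⊕ Fin d) R)ᵀ *
            ((a : Matrix (Fin d ⊕ Fin d) (Fin d ⊕ Fin d) R)ᵀ * Jmat d R *
              (a : Matrix (Fin d ⊕ Fin d) (Fin d ⊕ Fin d) R)) *
            ((a⁻¹ : GL (Fin d ⊕ Fin d) R) : Matrix (Fin d ⊕ Fin d) (Fin d ⊕ Fin d) R) := by
          rw [ha]
      _ = (((a⁻¹ : GL (Fin d ⊕ Fin d) R) : Matrix (Fin d ⊕ Fin d) (Fin d ⊕ Fin d) R)ᵀ *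
            (a : Matrix (Fin d ⊕ Fin d) (Fin d ⊕ Fin d) R)ᵀ) * Jmat d R *
            ((a : Matrix (Fin d ⊕ Fin d) (Fin d ⊕ Fin d) R) *
              ((a⁻¹ : GL (Fin d ⊕ Fin d) R) : Matrix (Fin d ⊕ Fin d) (Fin d ⊕ Fin d) R)) := by
          noncomm_ring
      _ = Jmat d R := by rw [h1, h2, one_mul, mul_one]

theorem Nat.Prime.pow_dvd_pow_mul_choose {p : ℕ} (hp : p.Prime) (hp3 : 3 ≤ p) (n : ℕ) {m : ℕ}
    (hm : 2 ≤ m) (hmp : m ≤ p) : p ^ (n + 3) ∣ p ^ ((n + 1) * m) * p.choose m := by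
  rcases hmp.eq_or_lt with rfl | hlt
  · rw [Nat.choose_self, mul_one]
    exact pow_dvd_pow _ (by nlinarith)
  · calc p ^ (n + 3) ∣ p ^ ((n + 1) * m) * p := by
          rw [← pow_succ]; exact pow_dvd_pow _ (by nlinarith)
      _ ∣ p ^ ((n + 1) * m) * p.choose m :=
          mul_dvd_mul_left _ (hp.dvd_choose_self (by omega) hlt)

theorem one_add_smul_pow_prime {S R : Type*} [CommRing S] [Ring R] [Algebra S R] {p : ℕ}
    (hp : p.Prime) (hp3 : 3 ≤ p) (n : ℕ) (a : R) :
    ∃ c : R,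
      (1 + (p : S) ^ (n + 1) • a) ^ p = 1 + (p : S) ^ (n + 2) • a + (p : S) ^ (n + 3) • c := by
  simp only [Algebra.smul_def, map_pow, map_natCast]
  -- `c` collects the binomial terms of degree `m ≥ 2`, each divisible by `p ^ (n + 3)`
  set q : ℕ → ℕ := fun m => p ^ ((n + 1) * m) * p.choose m / p ^ (n + 3)
  refine ⟨∑ m ∈ Finset.Ico 2 (p + 1), (q m : R) * a ^ m, ?_⟩
  have hterm : ∀ m, ((p : R) ^ (n + 1) * a) ^ m * 1 ^ (p - m) * (p.choose m : R)
      = ((p ^ ((n + 1) * m) * p.choose m : ℕ) : R) * a ^ m := by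
    intro m
    rw [one_pow, mul_one, ((Nat.cast_commute p a).pow_left (n + 1)).mul_pow, ← pow_mul,
      mul_assoc, ← (Nat.cast_commute _ _).eq, ← mul_assoc]
    push_cast
    rfl
  rw [add_comm 1, (Commute.one_right _).add_pow, Finset.range_eq_Ico,
    Finset.sum_eq_sum_Ico_succ_bot (by omega), Finset.sum_eq_sum_Ico_succ_bot (by omega),
    Finset.mul_sum]
  simp only [hterm]
  simp only [zero_add, mul_zero, pow_zero, Nat.choose_zero_right, mul_one, pow_one,
    Nat.choose_one_right, Nat.cast_one, add_assoc]
  congr 2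
  · push_cast
    rw [← pow_succ]
  refine Finset.sum_congr rfl fun m hm => ?_
  rw [Finset.mem_Ico] at hm
  rw [← mul_assoc, ← Nat.cast_pow, ← Nat.cast_mul,
    Nat.mul_div_cancel' (hp.pow_dvd_pow_mul_choose hp3 n hm.1 (by omega))]

section Symplectic

variable {d : ℕ} {R : Type*} [CommRing R]

theorem Jmat_transpose : (Jmat d R)ᵀ = -Jmat d R := by
  rw [Jmat, fromBlocks_transpose, fromBlocks_neg]
  simp

theorem Jmat_mul_Jmat : Jmat d R * Jmat d R = -1 := by
  rw [Jmat, fromBlocks_multiply, ← fromBlocks_one, fromBlocks_neg]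
  simp

theorem Jmat_mul_Jmat_mul (X : Matrix (Fin d ⊕ Fin d) (Fin d ⊕ Fin d) R) :
    Jmat d R * (Jmat d R * X) = -X := by
  rw [← Matrix.mul_assoc, Jmat_mul_Jmat, Matrix.neg_mul, Matrix.one_mul]

theorem isSkewAdjoint_add_Jmat_mul_transpose_mul (B : Matrix (Fin d ⊕ Fin d) (Fin d ⊕ Fin d) R) :
    (Jmat d R).IsSkewAdjoint (B + Jmat d R * Bᵀ * Jmat d R) := by
  simp only [Matrix.IsSkewAdjoint, Matrix.IsAdjointPair, transpose_add, transpose_mul,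
    transpose_transpose, Jmat_transpose, Matrix.neg_mul, Matrix.mul_neg, neg_neg, add_mul,
    Matrix.mul_add, Matrix.mul_assoc, Jmat_mul_Jmat, Jmat_mul_Jmat_mul, Matrix.mul_one, neg_add]
  abel

theorem Matrix.IsSkewAdjoint.smul {ι : Type*} [Fintype ι] {J A : Matrix ι ι R}
    (h : J.IsSkewAdjoint A) (c : R) : J.IsSkewAdjoint (c • A) := by
  rw [Matrix.IsSkewAdjoint, Matrix.IsAdjointPair, transpose_smul, smul_mul_assoc, h, ← smul_neg,
    mul_smul_comm]

theorem cayley_transpose_mul_mul {ι : Type*} [Fintype ι] [DecidableEq ι] {J Y V : Matrix ι ι R}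
    (hY : J.IsSkewAdjoint Y) (hV : (1 - Y) * V = 1) :
    ((1 + Y) * V)ᵀ * J * ((1 + Y) * V) = J := by
  have hY' : Yᵀ * J + J * Y = 0 := by
    rw [show Yᵀ * J = J * -Y from hY, Matrix.mul_neg, neg_add_cancel]
  have key : (1 + Y)ᵀ * J * (1 + Y) = (1 - Y)ᵀ * J * (1 - Y) := by
    rw [← sub_eq_zero, transpose_add, transpose_sub, transpose_one,
      show (1 + Yᵀ) * J * (1 + Y) - (1 - Yᵀ) * J * (1 - Y) = 2 • (Yᵀ * J + J * Y) by noncomm_ring,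
      hY', smul_zero]
  calc ((1 + Y) * V)ᵀ * J * ((1 + Y) * V) = Vᵀ * ((1 + Y)ᵀ * J * (1 + Y)) * V := by
        rw [transpose_mul]; noncomm_ring
    _ = ((1 - Y) * V)ᵀ * J * ((1 - Y) * V) := by
        rw [key, transpose_mul (1 - Y)]; noncomm_ring
    _ = J := by rw [hV, transpose_one, Matrix.one_mul, Matrix.mul_one]

theorem exists_isSkewAdjoint_eq_add_smul [IsDomain R] (h2 : IsUnit (2 : R)) {t : R} (ht : t ≠ 0)
    {B : Matrix (Fin d ⊕ Fin d) (Fin d ⊕ Fin d) R}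
    (hB : (1 + t • B)ᵀ * Jmat d R * (1 + t • B) = Jmat d R) :
    ∃ B', (Jmat d R).IsSkewAdjoint B' ∧ ∃ F, B' = B + t • F := by
  set J := Jmat d R
  obtain ⟨half, hhalf⟩ := h2.exists_right_inv
  have hexp : (1 + t • B)ᵀ * J * (1 + t • B)
      = J + t • (Bᵀ * J + J * B + t • (Bᵀ * J * B)) := by
    simp only [transpose_add, transpose_one, transpose_smul, add_mul, Matrix.mul_add,
      Matrix.one_mul, Matrix.mul_one, smul_mul_assoc, mul_smul_comm, smul_add, smul_smul]
    abel
  have hlin : Bᵀ * J + J * B + t • (Bᵀ * J * B) = 0 :=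
    (smul_eq_zero.mp (add_eq_left.mp (hexp ▸ hB))).resolve_left ht
  refine ⟨half • (B + J * Bᵀ * J), (isSkewAdjoint_add_Jmat_mul_transpose_mul B).smul half,
    -(half • (J * Bᵀ * J * B)), ?_⟩
  have hJBJ : J * Bᵀ * J = B - t • (J * Bᵀ * J * B) := by
    have := congrArg (J * ·) hlin
    simp only [Matrix.mul_add, mul_smul_comm, Matrix.mul_zero, ← Matrix.mul_assoc,
      show J * J = -1 from Jmat_mul_Jmat, Matrix.neg_mul, Matrix.one_mul] at this
    rw [← sub_eq_zero, ← this]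
    abel
  nth_rewrite 1 [hJBJ]
  linear_combination (norm := module) hhalf • B

theorem Jmat_map {S : Type*} [CommRing S] (f : R →+* S) : (Jmat d R).map f = Jmat d S := by
  simp [Jmat, fromBlocks_map, Matrix.map_neg]

theorem SpSubgroup_map_le {S : Type*} [CommRing S] (f : R →+* S) :
    (SpSubgroup d R).map (GeneralLinearGroup.map f) ≤ SpSubgroup d S := by
  rintro _ ⟨g, hg, rfl⟩
  change ((g : Matrix _ _ R).map f)ᵀ * Jmat d S * (g : Matrix _ _ R).map f = Jmat d S
  rw [← Jmat_map f, ← transpose_map, ← Matrix.map_mul, ← Matrix.map_mul, hg]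

end Symplectic

open Filter Topology

namespace PadicInt

variable {p : ℕ} [Fact p.Prime]

theorem toZModPow_eq_iff_pow_dvd_sub {n : ℕ} {a b : ℤ_[p]} :
    toZModPow n a = toZModPow n b ↔ (p : ℤ_[p]) ^ n ∣ a - b := by
  rw [← sub_eq_zero, ← map_sub, ← RingHom.mem_ker, ker_toZModPow, Ideal.mem_span_singleton]

theorem isUnit_two (hp : Odd p) : IsUnit (2 : ℤ_[p]) := by
  rw [isUnit_iff, ← Nat.cast_ofNat, norm_natCast_eq_one_iff,
    Nat.coprime_primes Fact.out Nat.prime_two]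
  rintro rfl
  exact Nat.not_even_iff_odd.mpr hp even_two

theorem tendsto_of_pow_dvd_sub {a : ℕ → ℤ_[p]} {b : ℤ_[p]} (h : ∀ n, (p : ℤ_[p]) ^ n ∣ a n - b) :
    Tendsto a atTop (𝓝 b) := by
  have hp : 1 < (p : ℝ) := mod_cast (Fact.out : p.Prime).one_lt
  rw [tendsto_iff_norm_sub_tendsto_zero]
  refine squeeze_zero (fun n => norm_nonneg _) (fun n => ?_)
    (tendsto_pow_atTop_nhds_zero_of_lt_one (by positivity) (inv_lt_one_of_one_lt₀ hp))
  have := (norm_le_pow_iff_mem_span_pow _ n).mpr (Ideal.mem_span_singleton.mpr (h n))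
  rwa [_root_.zpow_neg, zpow_natCast, ← inv_pow] at this

variable {ι : Type*} [Fintype ι] [DecidableEq ι]

theorem isUnit_one_add_p_smul (M : Matrix ι ι ℤ_[p]) : IsUnit (1 + (p : ℤ_[p]) • M) := by
  have hred : (1 + (p : ℤ_[p]) • M).map toZMod = 1 := by
    ext i j
    simp [Matrix.one_apply, apply_ite]
  rw [Matrix.isUnit_iff_isUnit_det, ← IsLocalRing.notMem_maximalIdeal, ← ker_toZMod,
    RingHom.mem_ker, RingHom.map_det, RingHom.mapMatrix_apply, hred, det_one]
  exact one_ne_zero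

theorem map_toZModPow_eq_iff {n : ℕ} {g h : GL ι ℤ_[p]} :
    GeneralLinearGroup.map (toZModPow n) g = GeneralLinearGroup.map (toZModPow n) h ↔
      ∃ E : Matrix ι ι ℤ_[p], (g : Matrix ι ι ℤ_[p]) = h + (p : ℤ_[p]) ^ n • E := by
  simp only [Units.ext_iff, ← Matrix.ext_iff, GeneralLinearGroup.map_apply,
    toZModPow_eq_iff_pow_dvd_sub]
  constructor
  · intro hd
    choose E hE using hd
    exact ⟨of E, fun i j => by simp [← hE]⟩
  · rintro ⟨E, hE⟩ i j
    exact ⟨E i j, by simp [hE i j]⟩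

theorem map_toZModPow_le_of_le {H K : Subgroup (GL ι ℤ_[p])} {m n : ℕ} (hmn : m ≤ n)
    (h : H.map (GeneralLinearGroup.map (toZModPow n)) ≤
      K.map (GeneralLinearGroup.map (toZModPow n))) :
    H.map (GeneralLinearGroup.map (toZModPow m)) ≤
      K.map (GeneralLinearGroup.map (toZModPow m)) := by
  rw [← zmod_cast_comp_toZModPow m n hmn, GeneralLinearGroup.map_comp, ← Subgroup.map_map,
    ← Subgroup.map_map]
  exact Subgroup.map_mono h

theorem tendsto_of_map_toZModPow_eq {g : ℕ → GL ι ℤ_[p]} {x : GL ι ℤ_[p]}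
    (h : ∀ n, GeneralLinearGroup.map (toZModPow n) (g n) = GeneralLinearGroup.map (toZModPow n) x) :
    Tendsto g atTop (𝓝 x) := by
  have hval : ∀ {g : ℕ → GL ι ℤ_[p]} {x : GL ι ℤ_[p]},
      (∀ n, GeneralLinearGroup.map (toZModPow n) (g n) = GeneralLinearGroup.map (toZModPow n) x) →
        Tendsto (fun n => (g n : Matrix ι ι ℤ_[p])) atTop (𝓝 x) := by
    intro g x h
    refine tendsto_pi_nhds.mpr fun i => tendsto_pi_nhds.mpr fun j =>
      tendsto_of_pow_dvd_sub fun n => ?_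
    rw [← toZModPow_eq_iff_pow_dvd_sub, ← GeneralLinearGroup.map_apply, h n,
      GeneralLinearGroup.map_apply]
  rw [Units.isInducing_embedProduct.tendsto_nhds_iff]
  refine (hval h).prodMk_nhds ((MulOpposite.continuous_op.tendsto _).comp (hval fun n => ?_))
  rw [map_inv, map_inv, h n]

theorem subset_closure_of_map_toZModPow_le {H K : Subgroup (GL ι ℤ_[p])}
    (h : ∀ n, H.map (GeneralLinearGroup.map (toZModPow n)) ≤
      K.map (GeneralLinearGroup.map (toZModPow n))) :
    (H : Set (GL ι ℤ_[p])) ⊆ closure K := by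
  intro x hx
  choose g hgK hg using fun n => h n ⟨x, hx, rfl⟩
  exact mem_closure_of_tendsto (tendsto_of_map_toZModPow_eq hg) (Eventually.of_forall hgK)

variable {d : ℕ}

theorem exists_mem_SpSubgroup_eq_of_isSkewAdjoint (hp : Odd p) (n : ℕ)
    {B : Matrix (Fin d ⊕ Fin d) (Fin d ⊕ Fin d) ℤ_[p]} (hB : (Jmat d ℤ_[p]).IsSkewAdjoint B) :
    ∃ w ∈ SpSubgroup d ℤ_[p], ∃ E,
      (w : Matrix _ _ ℤ_[p]) = 1 + (p : ℤ_[p]) ^ (n + 1) • B + (p : ℤ_[p]) ^ (n + 2) • E := by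
  obtain ⟨half, hhalf⟩ := (isUnit_two hp).exists_right_inv
  set Y := (p : ℤ_[p]) ^ (n + 1) • half • B with hY
  have hYskew : (Jmat d ℤ_[p]).IsSkewAdjoint Y := (hB.smul half).smul _
  have hYp : Y = (p : ℤ_[p]) • ((p : ℤ_[p]) ^ n • half • B) := by rw [smul_smul, ← pow_succ']
  have hunit_add : IsUnit (1 + Y) := hYp ▸ isUnit_one_add_p_smul _
  have hunit_sub : IsUnit (1 - Y) := by
    rw [hYp, sub_eq_add_neg, ← smul_neg]
    exact isUnit_one_add_p_smul _
  set V : Matrix (Fin d ⊕ Fin d) (Fin d ⊕ Fin d) ℤ_[p] := ↑hunit_sub.unit⁻¹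
  have hV : (1 - Y) * V = 1 := hunit_sub.mul_val_inv
  have h2Y : Y + Y = (p : ℤ_[p]) ^ (n + 1) • B := by
    rw [hY]
    linear_combination (norm := module) ((p : ℤ_[p]) ^ (n + 1) * hhalf) • B
  refine ⟨hunit_add.unit * hunit_sub.unit⁻¹, cayley_transpose_mul_mul hYskew hV,
    ((p : ℤ_[p]) ^ n * half) • (B * B * V), ?_⟩
  calc ((hunit_add.unit * hunit_sub.unit⁻¹ : GL _ ℤ_[p]) : Matrix _ _ ℤ_[p]) = (1 + Y) * V := rfl
    _ = (1 + (Y + Y)) * ((1 - Y) * V) + (Y + Y) * Y * V := by noncomm_ring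
    _ = _ := by
      rw [hV, h2Y, hY]
      simp only [smul_mul_assoc, mul_smul_comm, Matrix.mul_one]
      module

theorem exists_mem_SpSubgroup_eq_one_add_pow_smul (hp : Odd p) (n : ℕ)
    {B : Matrix (Fin d ⊕ Fin d) (Fin d ⊕ Fin d) ℤ_[p]}
    (hB : (1 + (p : ℤ_[p]) ^ (n + 2) • B)ᵀ * Jmat d ℤ_[p] * (1 + (p : ℤ_[p]) ^ (n + 2) • B)
      = Jmat d ℤ_[p]) :
    ∃ w ∈ SpSubgroup d ℤ_[p], ∃ E,
      (w : Matrix _ _ ℤ_[p]) = 1 + (p : ℤ_[p]) ^ (n + 1) • B + (p : ℤ_[p]) ^ (n + 2) • E := by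
  obtain ⟨B', hB', F, rfl⟩ := exists_isSkewAdjoint_eq_add_smul (isUnit_two hp)
    (pow_ne_zero _ (Nat.cast_ne_zero.mpr (Fact.out : p.Prime).ne_zero)) hB
  obtain ⟨w, hw, E, hE⟩ := exists_mem_SpSubgroup_eq_of_isSkewAdjoint hp n hB'
  exact ⟨w, hw, E + (p : ℤ_[p]) ^ (n + 1) • F, by rw [hE]; module⟩

theorem SpSubgroup_map_toZModPow_le_succ (hp : Odd p) {K : Subgroup (GL (Fin d ⊕ Fin d) ℤ_[p])}
    (hK : K ≤ SpSubgroup d ℤ_[p]) {n : ℕ}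
    (h : (SpSubgroup d ℤ_[p]).map (GeneralLinearGroup.map (toZModPow (n + 2))) ≤
      K.map (GeneralLinearGroup.map (toZModPow (n + 2)))) :
    (SpSubgroup d ℤ_[p]).map (GeneralLinearGroup.map (toZModPow (n + 3))) ≤
      K.map (GeneralLinearGroup.map (toZModPow (n + 3))) := by
  have hp3 : 3 ≤ p := by
    obtain ⟨t, rfl⟩ := hp
    have := (Fact.out : (2 * t + 1).Prime).two_le
    omega
  rintro _ ⟨x, hx, rfl⟩
  obtain ⟨k, hk, hkx⟩ := h ⟨x, hx, rfl⟩
  have hxk : GeneralLinearGroup.map (toZModPow (n + 2)) (x * k⁻¹) =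
      GeneralLinearGroup.map (toZModPow (n + 2)) 1 := by
    rw [map_mul, map_inv, hkx, mul_inv_cancel, map_one]
  obtain ⟨B, hB⟩ := map_toZModPow_eq_iff.mp hxk
  rw [Units.val_one] at hB
  have hu : (↑(x * k⁻¹) : Matrix (Fin d ⊕ Fin d) (Fin d ⊕ Fin d) ℤ_[p])ᵀ * Jmat d ℤ_[p] *
      (↑(x * k⁻¹) : Matrix (Fin d ⊕ Fin d) (Fin d ⊕ Fin d) ℤ_[p]) = Jmat d ℤ_[p] :=
    mul_mem hx (inv_mem (hK hk))
  rw [hB] at hu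
  obtain ⟨w, hw, E, hwE⟩ := exists_mem_SpSubgroup_eq_one_add_pow_smul hp n hu
  obtain ⟨k', hk', hk'w⟩ := h ⟨w, hw, rfl⟩
  obtain ⟨E', hE'⟩ := map_toZModPow_eq_iff.mp hk'w
  have hk'B : (k' : Matrix _ _ ℤ_[p]) =
      1 + (p : ℤ_[p]) ^ (n + 1) • (B + (p : ℤ_[p]) • (E + E')) := by
    rw [hE', hwE]
    module
  obtain ⟨c, hc⟩ := one_add_smul_pow_prime (S := ℤ_[p]) Fact.out hp3 n (B + (p : ℤ_[p]) • (E + E'))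
  have hk'p : GeneralLinearGroup.map (toZModPow (n + 3)) (k' ^ p) =
      GeneralLinearGroup.map (toZModPow (n + 3)) (x * k⁻¹) := by
    refine map_toZModPow_eq_iff.mpr ⟨E + E' + c, ?_⟩
    rw [Units.val_pow_eq_pow_val, hk'B, hc, hB]
    module
  refine ⟨k' ^ p * k, mul_mem (pow_mem hk' p) hk, ?_⟩
  rw [map_mul, hk'p, ← map_mul, inv_mul_cancel_right]

theorem SpSubgroup_map_toZModPow_le (hp : Odd p) {K : Subgroup (GL (Fin d ⊕ Fin d) ℤ_[p])}
    (hK : K ≤ SpSubgroup d ℤ_[p])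
    (h2 : SpSubgroup d (ZMod (p ^ 2)) ≤ K.map (GeneralLinearGroup.map (toZModPow 2))) (n : ℕ) :
    (SpSubgroup d ℤ_[p]).map (GeneralLinearGroup.map (toZModPow (n + 2))) ≤
      K.map (GeneralLinearGroup.map (toZModPow (n + 2))) := by
  induction n with
  | zero => exact (SpSubgroup_map_le _).trans h2
  | succ n ih => exact SpSubgroup_map_toZModPow_le_succ hp hK ih

end PadicInt

theorem stmt4_general (p : ℕ) [Fact p.Prime] (hp : Odd p) (d : ℕ)
    (K : Subgroup (GL (Fin d ⊕ Fin d) ℤ_[p]))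
    (hsub : K ≤ SpSubgroup d ℤ_[p])
    (hclosed : IsClosed (K : Set (GL (Fin d ⊕ Fin d) ℤ_[p])))
    (hsurj : ∀ g : GL (Fin d ⊕ Fin d) (ZMod (p ^ 2)), g ∈ SpSubgroup d (ZMod (p ^ 2)) →
      ∃ k ∈ K, Matrix.GeneralLinearGroup.map (PadicInt.toZModPow 2) k = g) :
    K = SpSubgroup d ℤ_[p] := by
  have hmap : ∀ n, (SpSubgroup d ℤ_[p]).map (GeneralLinearGroup.map (PadicInt.toZModPow n))
      ≤ K.map (GeneralLinearGroup.map (PadicInt.toZModPow n)) := fun n =>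
    PadicInt.map_toZModPow_le_of_le (Nat.le_add_right n 2)
      (PadicInt.SpSubgroup_map_toZModPow_le hp hsub hsurj n)
  refine le_antisymm hsub fun x hx => ?_
  simpa [hclosed.closure_eq] using PadicInt.subset_closure_of_map_toZModPow_le hmap hx

/-- Let `p` be an odd prime and `d ≥ 1`. If `K` is a closed subgroup of
`Sp_{2d}(ℤ_p)` whose image under the reduction map `Sp_{2d}(ℤ_p) → Sp_{2d}(ℤ/p²ℤ)` is all of
`Sp_{2d}(ℤ/p²ℤ)`, then `K = Sp_{2d}(ℤ_p)`. -/
theorem stmt4 (p : ℕ) [Fact p.Prime] (hp : Odd p) (d : ℕ) (hd : 1 ≤ d)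
    (K : Subgroup (GL (Fin d ⊕ Fin d) ℤ_[p]))
    (hsub : K ≤ SpSubgroup d ℤ_[p])
    (hclosed : IsClosed (K : Set (GL (Fin d ⊕ Fin d) ℤ_[p])))
    (hsurj : ∀ g : GL (Fin d ⊕ Fin d) (ZMod (p ^ 2)), g ∈ SpSubgroup d (ZMod (p ^ 2)) →
      ∃ k ∈ K, Matrix.GeneralLinearGroup.map (PadicInt.toZModPow 2) k = g) :
    K = SpSubgroup d ℤ_[p] :=
  stmt4_general p hp d K hsub hclosed hsurj
end

section
/- Let d ≥ 1. If K is a closed subgroup of the symplectic group Sp_{2d}(ℤ₂) whose image under the reduction map Sp_{2d}(ℤ₂) → Sp_{2d}(ℤ/8ℤ) is all of Sp_{2d}(ℤ/8ℤ), then K = Sp_{2d}(ℤ₂). (Lemma 2.2.1(a) for p = 2, instantiated at G = Sp_{2d} over ℤ₂.) -/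
open Matrix

/-- The reduction-mod-8 ring homomorphism `ℤ₂ →+* ℤ/8ℤ`. -/
noncomputable def toZMod8 : ℤ_[2] →+* ZMod 8 :=
  (ZMod.castHom (show (8 : ℕ) ∣ 2 ^ 3 by norm_num) (ZMod 8)).comp (PadicInt.toZModPow 3)

/-!
By induction on `n ≥ 3`, every `g ∈ Sp_{2d}(ℤ₂)` is congruent modulo `2ⁿ` to an element of `K`,
the case `n = 3` being the surjectivity hypothesis. Given `k ∈ K` with `k ≡ g mod 2ⁿ`, the
symplectic matrix `u = k⁻¹ g ≡ 1 mod 2ⁿ` has, modulo `2ⁿ⁺¹`, a symplectic square root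
`y ≡ 1 mod 2ⁿ⁻¹`, obtained as a Cayley transform. If `h ∈ K` approximates `y` modulo `2ⁿ`, then
`h² ≡ y² mod 2ⁿ⁺¹`, so `k h² ≡ g mod 2ⁿ⁺¹`. Thus `K` is dense in `Sp_{2d}(ℤ₂)`, and closed.
-/

section Symplectic

variable {d : ℕ} {R : Type*} [CommRing R]

theorem Jmat_eq_neg_J : Jmat d R = -J (Fin d) R := by
  simp [Jmat, J, fromBlocks_neg]

theorem RingHom.mapMatrix_Jmat {S : Type*} [CommRing S] (f : R →+* S) :
    f.mapMatrix (Jmat d R) = Jmat d S := by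
  rw [RingHom.mapMatrix_apply, Jmat_eq_neg_J, Matrix.map_neg _ (map_neg f), map_J,
    Jmat_eq_neg_J]

theorem mem_SpSubgroup_iff {g : GL (Fin d ⊕ Fin d) R} :
    g ∈ SpSubgroup d R ↔ (g : Matrix (Fin d ⊕ Fin d) (Fin d ⊕ Fin d) R)ᵀ * Jmat d R * g = Jmat d R :=
  Iff.rfl

theorem map_mem_SpSubgroup {S : Type*} [CommRing S] (f : R →+* S) {g : GL (Fin d ⊕ Fin d) R}
    (hg : g ∈ SpSubgroup d R) : GeneralLinearGroup.map f g ∈ SpSubgroup d S := by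
  have := congrArg f.mapMatrix (mem_SpSubgroup_iff.1 hg)
  rwa [map_mul, map_mul, RingHom.mapMatrix_Jmat, RingHom.mapMatrix_apply, transpose_map] at this

end Symplectic

section Cayley

variable {ι R : Type*} [Fintype ι] [CommRing R]

def IsHamiltonian (J X : Matrix ι ι R) : Prop :=
  Xᵀ * J + J * X = 0

theorem IsHamiltonian.smul {J X : Matrix ι ι R} (hX : IsHamiltonian J X) (c : R) :
    IsHamiltonian J (c • X) := by
  rw [IsHamiltonian, transpose_smul, smul_mul_assoc, mul_smul_comm, ← smul_add, hX, smul_zero]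

theorem transpose_mul_mul_cayley [DecidableEq ι] {J X z : Matrix ι ι R} (hX : IsHamiltonian J X)
    (hz : (1 - X) * z = 1) : ((1 + X) * z)ᵀ * J * ((1 + X) * z) = J := by
  have key : (1 + X)ᵀ * J * (1 + X) = (1 - X)ᵀ * J * (1 - X) := by
    have h : (1 + X)ᵀ * J * (1 + X) - (1 - X)ᵀ * J * (1 - X) = (2 : R) • (Xᵀ * J + J * X) := by
      simp only [transpose_add, transpose_sub, transpose_one, add_mul, sub_mul, mul_add, mul_sub,
        one_mul, mul_one]
      module
    rwa [hX, smul_zero, sub_eq_zero] at h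
  calc ((1 + X) * z)ᵀ * J * ((1 + X) * z) = zᵀ * ((1 + X)ᵀ * J * (1 + X)) * z := by
        simp only [transpose_mul, mul_assoc]
    _ = ((1 - X) * z)ᵀ * J * ((1 - X) * z) := by
        rw [key]; simp only [transpose_mul, mul_assoc]
    _ = J := by rw [hz, transpose_one, one_mul, mul_one]

theorem transpose_mul_mul_one_add_smul [DecidableEq ι] (J A : Matrix ι ι R) (a : R) :
    (1 + a • A)ᵀ * J * (1 + a • A) = J + a • (Aᵀ * J + J * A + a • (Aᵀ * J * A)) := by
  simp only [transpose_add, transpose_one, transpose_smul, add_mul, mul_add, one_mul, mul_one,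
    smul_mul_assoc, mul_smul_comm, smul_add, smul_smul]
  module

end Cayley

theorem isHamiltonian_Jmat_sub_smul {d : ℕ} {R : Type*} [CommRing R]
    {A : Matrix (Fin d ⊕ Fin d) (Fin d ⊕ Fin d) R} {b : R}
    (hA : Aᵀ * Jmat d R + Jmat d R * A + (2 * b) • (Aᵀ * Jmat d R * A) = 0) :
    IsHamiltonian (Jmat d R) (A - b • (Jmat d R * (Aᵀ * Jmat d R * A))) := by
  set J := Jmat d R
  set S := Aᵀ * J * A
  have hS : Sᵀ = -S := by simp only [S, transpose_mul, transpose_transpose, Jmat_transpose, J,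
    mul_neg, neg_mul, mul_assoc]
  have h1 : (J * S)ᵀ * J = -S := by
    rw [transpose_mul, mul_assoc, Jmat_transpose, neg_mul, Jmat_mul_Jmat, neg_neg, mul_one, hS]
  have h2 : J * (J * S) = -S := by rw [← mul_assoc, Jmat_mul_Jmat, neg_one_mul]
  rw [IsHamiltonian, transpose_sub, transpose_smul, sub_mul, mul_sub, smul_mul_assoc,
    mul_smul_comm, h1, h2, ← hA]
  module

def Matrix.ModEq {m n R : Type*} [CommRing R] (c : R) (A B : Matrix m n R) : Prop :=
  ∃ E, A = B + c • E

namespace Matrix.ModEq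

variable {l m n R : Type*} [CommRing R] {a b c : R} {A B C : Matrix m n R}

@[symm]
protected theorem symm (h : ModEq c A B) : ModEq c B A := by
  obtain ⟨E, rfl⟩ := h
  exact ⟨-E, by rw [smul_neg, add_neg_cancel_right]⟩

@[trans]
protected theorem trans (h₁ : ModEq c A B) (h₂ : ModEq c B C) : ModEq c A C := by
  obtain ⟨E, rfl⟩ := h₁
  obtain ⟨F, rfl⟩ := h₂
  exact ⟨F + E, by rw [smul_add, add_assoc]⟩

theorem of_dvd (hab : a ∣ b) (h : ModEq b A B) : ModEq a A B := by
  obtain ⟨k, rfl⟩ := hab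
  obtain ⟨E, rfl⟩ := h
  exact ⟨k • E, by rw [smul_smul]⟩

theorem mul_left [Fintype m] (D : Matrix l m R) (h : ModEq c A B) : ModEq c (D * A) (D * B) := by
  obtain ⟨E, rfl⟩ := h
  exact ⟨D * E, by rw [Matrix.mul_add, Matrix.mul_smul]⟩

variable {ι : Type*} [Fintype ι] [DecidableEq ι]

theorem units_inv {g h : GL ι R} (hgh : ModEq c (g : Matrix ι ι R) h) :
    ModEq c ((g⁻¹ : GL ι R) : Matrix ι ι R) (h⁻¹ : GL ι R) := by
  obtain ⟨E, hE⟩ := hgh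
  refine ⟨-((g⁻¹ : GL ι R) * E * (h⁻¹ : GL ι R)), ?_⟩
  calc ((g⁻¹ : GL ι R) : Matrix ι ι R)
      = (g⁻¹ : GL ι R) * (h * (h⁻¹ : GL ι R)) := by rw [← Units.val_mul, mul_inv_cancel,
        Units.val_one, mul_one]
    _ = (g⁻¹ : GL ι R) * ((g - c • E) * (h⁻¹ : GL ι R)) := by rw [hE, add_sub_cancel_right]
    _ = _ := by
        rw [sub_mul, mul_sub, ← mul_assoc, ← Units.val_mul, inv_mul_cancel, Units.val_one,
          one_mul, smul_mul_assoc, mul_smul_comm, mul_assoc, smul_neg, sub_eq_add_neg]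

theorem mul_self {A B : Matrix ι ι R} (h : ModEq (2 * b) A B) (hB : ModEq (2 * a) B 1) :
    ModEq (4 * b) (A * A) (B * B) := by
  obtain ⟨F, rfl⟩ := h
  obtain ⟨Y, rfl⟩ := hB
  refine ⟨F + a • (Y * F + F * Y) + b • (F * F), ?_⟩
  simp only [mul_add, add_mul, smul_mul_assoc, mul_smul_comm, smul_add, smul_smul, one_mul,
    mul_one]
  module

end Matrix.ModEq

theorem Matrix.isUnit_of_modEq_one {ι R : Type*} [Fintype ι] [DecidableEq ι] [CommRing R]
    [IsLocalRing R] {c : R} (hc : c ∈ IsLocalRing.maximalIdeal R) {M : Matrix ι ι R}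
    (hM : ModEq c M 1) : IsUnit M := by
  obtain ⟨E, rfl⟩ := hM
  have hres : (IsLocalRing.residue R).mapMatrix (1 + c • E) = 1 := by
    ext i j
    simp [(IsLocalRing.residue_eq_zero_iff c).2 hc, Matrix.one_apply]
  rw [isUnit_iff_isUnit_det, ← IsLocalRing.residue_ne_zero_iff_isUnit, RingHom.map_det, hres,
    det_one]
  exact one_ne_zero

theorem PadicInt.tendsto_of_pow_dvd_sub_s5 {p : ℕ} [Fact p.Prime] {x : ℕ → ℤ_[p]} {y : ℤ_[p]}
    (h : ∀ n, (p : ℤ_[p]) ^ n ∣ x n - y) : Filter.Tendsto x Filter.atTop (nhds y) := by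
  rw [tendsto_iff_norm_sub_tendsto_zero]
  refine squeeze_zero (fun _ ↦ norm_nonneg _)
    (fun n ↦ (norm_le_pow_iff_mem_span_pow _ n).2 (Ideal.mem_span_singleton.2 (h n))) ?_
  simp only [_root_.zpow_neg, zpow_natCast]
  exact tendsto_inv_atTop_zero.comp
    (tendsto_pow_atTop_atTop_of_one_lt (mod_cast (Fact.out : p.Prime).one_lt))

theorem Matrix.tendsto_of_modEq_pow {ι : Type*} {p : ℕ} [Fact p.Prime] {M : ℕ → Matrix ι ι ℤ_[p]}
    {N : Matrix ι ι ℤ_[p]} (h : ∀ n, ModEq ((p : ℤ_[p]) ^ n) (M n) N) :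
    Filter.Tendsto M Filter.atTop (nhds N) := by
  refine tendsto_pi_nhds.2 fun i ↦ tendsto_pi_nhds.2 fun j ↦
    PadicInt.tendsto_of_pow_dvd_sub_s5 fun n ↦ ?_
  obtain ⟨E, hE⟩ := h n
  exact ⟨E i j, by simp [hE]⟩

theorem Matrix.GeneralLinearGroup.tendsto_of_modEq_pow {ι : Type*} [Fintype ι] [DecidableEq ι]
    {p : ℕ} [Fact p.Prime] {k : ℕ → GL ι ℤ_[p]} {g : GL ι ℤ_[p]}
    (h : ∀ n, ModEq ((p : ℤ_[p]) ^ n) (k n : Matrix ι ι ℤ_[p]) g) :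
    Filter.Tendsto k Filter.atTop (nhds g) := by
  rw [Units.isInducing_embedProduct.tendsto_nhds_iff]
  simp only [Function.comp_def, Units.embedProduct_apply]
  exact (Matrix.tendsto_of_modEq_pow h).prodMk_nhds ((MulOpposite.continuous_op.tendsto _).comp
    (Matrix.tendsto_of_modEq_pow fun n ↦ (h n).units_inv))

theorem dvd_sub_of_toZMod8_eq {x y : ℤ_[2]} (h : toZMod8 x = toZMod8 y) : (8 : ℤ_[2]) ∣ x - y := by
  have hinj : Function.Injective (ZMod.castHom (show (8 : ℕ) ∣ 2 ^ 3 by norm_num) (ZMod 8)) := by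
    decide
  have hker : x - y ∈ RingHom.ker (PadicInt.toZModPow (p := 2) 3) := by
    rw [RingHom.mem_ker, map_sub, hinj h, sub_self]
  rw [PadicInt.ker_toZModPow, Ideal.mem_span_singleton] at hker
  norm_num at hker
  exact hker

theorem Matrix.modEq_eight_of_map_toZMod8_eq {ι : Type*} {P Q : Matrix ι ι ℤ_[2]}
    (h : P.map toZMod8 = Q.map toZMod8) : ModEq 8 P Q := by
  choose E hE using fun i j ↦ dvd_sub_of_toZMod8_eq (congrFun (congrFun h i) j)
  exact ⟨of E, by ext i j; simp [← hE i j]⟩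

theorem PadicInt.two_mem_maximalIdeal : (2 : ℤ_[2]) ∈ IsLocalRing.maximalIdeal ℤ_[2] := by
  rw [PadicInt.maximalIdeal_eq_span_p, Ideal.mem_span_singleton]
  norm_num

section TwoAdic

variable {d : ℕ}

local notation "Mat" => Matrix (Fin d ⊕ Fin d) (Fin d ⊕ Fin d) ℤ_[2]

/-- `y` is the Cayley transform `(1 + X)(1 - X)⁻¹` of a Hamiltonian `X` close to `(u - 1) / 4`;
the correction making `X` Hamiltonian is quadratic in `u - 1`. -/
theorem exists_sq_modEq_of_modEq_one {c : ℤ_[2]} (hc : c ≠ 0) {u : Mat}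
    (hu : uᵀ * Jmat d ℤ_[2] * u = Jmat d ℤ_[2]) (hu1 : ModEq (8 * c) u 1) :
    ∃ y : Mat, yᵀ * Jmat d ℤ_[2] * y = Jmat d ℤ_[2] ∧ ModEq (2 * (2 * c)) y 1 ∧
      ModEq (16 * c) (y * y) u := by
  set J := Jmat d ℤ_[2]
  obtain ⟨A, rfl⟩ := hu1
  set S := Aᵀ * J * A
  have hA : Aᵀ * J + J * A + (2 * (4 * c)) • S = 0 := by
    rw [transpose_mul_mul_one_add_smul, add_eq_left, smul_eq_zero] at hu
    rw [show (2 : ℤ_[2]) * (4 * c) = 8 * c by ring]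
    exact hu.resolve_left (mul_ne_zero (by norm_num) hc)
  set B := A - (4 * c) • (J * S)
  have hB : IsHamiltonian J B := isHamiltonian_Jmat_sub_smul hA
  set X := (2 * c) • B
  obtain ⟨z, hz⟩ : ∃ z, (1 - X) * z = 1 :=
    (isUnit_of_modEq_one PadicInt.two_mem_maximalIdeal ⟨-(c • B), by
      rw [smul_neg, smul_smul, sub_eq_add_neg]⟩).exists_right_inv
  have hz' : z = 1 + X * z := by rw [← hz, sub_mul, one_mul, sub_add_cancel]
  have hy : (1 + X) * z = 1 + (2 * (2 * c)) • (B * z) := by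
    rw [add_mul, one_mul]
    nth_rewrite 1 [hz']
    simp only [X, smul_mul_assoc]
    module
  refine ⟨(1 + X) * z, transpose_mul_mul_cayley (hB.smul _) hz, ⟨B * z, hy⟩, ?_⟩
  have hP : B * z = B + (2 * c) • (B * (B * z)) := by
    nth_rewrite 1 [hz']
    rw [mul_add, mul_one, smul_mul_assoc, mul_smul_comm]
  refine ⟨c • (B * (B * z) + B * z * (B * z)) - (2 * c) • (J * S), ?_⟩
  have hAB : A = B + (4 * c) • (J * S) := by simp only [B, sub_add_cancel]
  rw [hy, hAB]
  simp only [mul_add, add_mul, one_mul, mul_one, smul_mul_assoc, mul_smul_comm, smul_add,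
    smul_sub, smul_smul]
  linear_combination (norm := module) (8 * c) • hP

end TwoAdic

section Density

variable {d : ℕ} {K : Subgroup (GL (Fin d ⊕ Fin d) ℤ_[2])}

local notation "Mat" => Matrix (Fin d ⊕ Fin d) (Fin d ⊕ Fin d) ℤ_[2]

theorem exists_mem_modEq_eight
    (hsurj : ∀ g : GL (Fin d ⊕ Fin d) (ZMod 8), g ∈ SpSubgroup d (ZMod 8) →
      ∃ k ∈ K, Matrix.GeneralLinearGroup.map toZMod8 k = g)
    {g : GL (Fin d ⊕ Fin d) ℤ_[2]} (hg : g ∈ SpSubgroup d ℤ_[2]) :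
    ∃ k ∈ K, ModEq 8 (k : Mat) g := by
  obtain ⟨k, hkK, hk⟩ := hsurj _ (map_mem_SpSubgroup toZMod8 hg)
  exact ⟨k, hkK, modEq_eight_of_map_toZMod8_eq (congrArg Units.val hk)⟩

theorem exists_mem_modEq_two_pow_succ (hsub : K ≤ SpSubgroup d ℤ_[2]) {m : ℕ}
    (hK : ∀ g ∈ SpSubgroup d ℤ_[2], ∃ k ∈ K, ModEq (2 ^ (m + 3)) (k : Mat) g)
    {g : GL (Fin d ⊕ Fin d) ℤ_[2]} (hg : g ∈ SpSubgroup d ℤ_[2]) :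
    ∃ k ∈ K, ModEq (2 ^ (m + 4)) (k : Mat) g := by
  obtain ⟨k, hkK, hk⟩ := hK g hg
  have hu : ModEq (8 * 2 ^ m) ((k⁻¹ * g : GL (Fin d ⊕ Fin d) ℤ_[2]) : Mat) 1 := by
    have := hk.symm.mul_left ((k⁻¹ : GL (Fin d ⊕ Fin d) ℤ_[2]) : Mat)
    rwa [← Units.val_mul, ← Units.val_mul, inv_mul_cancel, Units.val_one,
      show (2 : ℤ_[2]) ^ (m + 3) = 8 * 2 ^ m by ring] at this
  obtain ⟨y, hySp, hy1, hyu⟩ := exists_sq_modEq_of_modEq_one (pow_ne_zero m two_ne_zero)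
    (mem_SpSubgroup_iff.1 (mul_mem (inv_mem (hsub hkK)) hg)) hu
  obtain ⟨y, rfl⟩ :=
    isUnit_of_modEq_one PadicInt.two_mem_maximalIdeal (hy1.of_dvd (dvd_mul_right _ _))
  obtain ⟨h, hhK, hh⟩ := hK y hySp
  refine ⟨k * (h * h), mul_mem hkK (mul_mem hhK hhK), ?_⟩
  rw [show (2 : ℤ_[2]) ^ (m + 3) = 2 * 2 ^ (m + 2) by ring] at hh
  have hhy := (hh.mul_self hy1).mul_left (k : Mat)
  rw [show (4 : ℤ_[2]) * 2 ^ (m + 2) = 16 * 2 ^ m by ring] at hhy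
  have hyg := hyu.mul_left (k : Mat)
  rw [← Units.val_mul k, mul_inv_cancel_left] at hyg
  simpa only [Units.val_mul, show (2 : ℤ_[2]) ^ (m + 4) = 16 * 2 ^ m by ring] using hhy.trans hyg

theorem exists_mem_modEq_two_pow (hsub : K ≤ SpSubgroup d ℤ_[2])
    (hsurj : ∀ g : GL (Fin d ⊕ Fin d) (ZMod 8), g ∈ SpSubgroup d (ZMod 8) →
      ∃ k ∈ K, Matrix.GeneralLinearGroup.map toZMod8 k = g)
    {g : GL (Fin d ⊕ Fin d) ℤ_[2]} (hg : g ∈ SpSubgroup d ℤ_[2]) (n : ℕ) :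
    ∃ k ∈ K, ModEq (2 ^ n) (k : Mat) g := by
  have hK : ∀ m, ∀ g ∈ SpSubgroup d ℤ_[2], ∃ k ∈ K, ModEq (2 ^ (m + 3)) (k : Mat) g := by
    intro m
    induction m with
    | zero => simpa only [zero_add, show (2 : ℤ_[2]) ^ 3 = 8 by norm_num] using
        fun g ↦ exists_mem_modEq_eight hsurj (g := g)
    | succ m ih => exact fun g ↦ exists_mem_modEq_two_pow_succ hsub ih
  obtain ⟨k, hkK, hk⟩ := hK n g hg
  exact ⟨k, hkK, hk.of_dvd (pow_dvd_pow 2 (Nat.le_add_right n 3))⟩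

end Density

theorem stmt5_general (d : ℕ)
    (K : Subgroup (GL (Fin d ⊕ Fin d) ℤ_[2]))
    (hsub : K ≤ SpSubgroup d ℤ_[2])
    (hclosed : IsClosed (K : Set (GL (Fin d ⊕ Fin d) ℤ_[2])))
    (hsurj : ∀ g : GL (Fin d ⊕ Fin d) (ZMod 8), g ∈ SpSubgroup d (ZMod 8) →
      ∃ k ∈ K, Matrix.GeneralLinearGroup.map toZMod8 k = g) :
    K = SpSubgroup d ℤ_[2] := by
  refine le_antisymm hsub fun g hg ↦ ?_
  choose k hkK hk using exists_mem_modEq_two_pow hsub hsurj hg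
  exact hclosed.mem_of_tendsto (GeneralLinearGroup.tendsto_of_modEq_pow (p := 2) (by simpa using hk))
    (.of_forall hkK)

/-- Let `d ≥ 1`. If `K` is a closed subgroup of `Sp_{2d}(ℤ₂)` whose image
under the reduction map `Sp_{2d}(ℤ₂) → Sp_{2d}(ℤ/8ℤ)` is all of `Sp_{2d}(ℤ/8ℤ)`, then
`K = Sp_{2d}(ℤ₂)`. -/
theorem stmt5 (d : ℕ) (hd : 1 ≤ d)
    (K : Subgroup (GL (Fin d ⊕ Fin d) ℤ_[2]))
    (hsub : K ≤ SpSubgroup d ℤ_[2])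
    (hclosed : IsClosed (K : Set (GL (Fin d ⊕ Fin d) ℤ_[2])))
    (hsurj : ∀ g : GL (Fin d ⊕ Fin d) (ZMod 8), g ∈ SpSubgroup d (ZMod 8) →
      ∃ k ∈ K, Matrix.GeneralLinearGroup.map toZMod8 k = g) :
    K = SpSubgroup d ℤ_[2] :=
  stmt5_general d K hsub hclosed hsurj
end
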